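/- Let k ≥ 2 be an integer and let Q = T[H_1, …, H_t] be a digraph composition. Then all vertices of Q are k-kings if and only if for each i ∈ [t], the vertex u_i is a k-king of T and at least one of the following holds: (i) all vertices of H_i are k-kings of H_i; (ii) |V(H_i)| ≥ 2 and u_i belongs to a directed cycle of T of length at most k. -/

import Mathlib

universe u v

/-- There is a directed walk of length at most `n` from `x` to `y`. -/
def ReachIn {V : Type u} (A : V → V → Prop) : ℕ → V → V → Prop
  | 0 => fun x y => x = y
  | n + 1 => fun x y => x = y ∨ ∃ z, A x z ∧ ReachIn A n z y

/-- A digraph is strong if every vertex can reach every other vertex. -/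
def IsStrong {V : Type u} (A : V → V → Prop) : Prop :=
  ∀ x y : V, Relation.ReflTransGen A x y

/-- A digraph is loopless if it has no loops. -/
def Loopless {V : Type u} (A : V → V → Prop) : Prop := ∀ x, ¬ A x x

/-- A digraph is semicomplete if there is at least one arc between any two distinct vertices. -/
def Semicomplete {V : Type u} (A : V → V → Prop) : Prop :=
  ∀ x y : V, x ≠ y → A x y ∨ A y x

/-- The subdigraph induced on a set `s` of vertices. -/
def Restrict {V : Type u} (A : V → V → Prop) (s : Set V) :
    {v // v ∈ s} → {v // v ∈ s} → Prop := fun x y => A x.1 y.1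

/-- `S` is a separator: deleting `S` leaves a non-strong digraph. -/
def IsSeparator {V : Type u} (A : V → V → Prop) (S : Set V) : Prop :=
  ¬ IsStrong (Restrict A Sᶜ)

/-- A digraph is `k`-strong-connected if every separator has at least `k` vertices. -/
def KStrong {V : Type u} (A : V → V → Prop) (k : ℕ) : Prop :=
  ∀ S : Set V, IsSeparator A S → k ≤ S.ncard

/-- The composition `T[H₁, …, H_t]`. -/
def Comp {t : ℕ} (T : Fin t → Fin t → Prop) (V : Fin t → Type u)
    (H : ∀ i, V i → V i → Prop) : (Σ i, V i) → (Σ i, V i) → Prop :=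
  fun p q => T p.1 q.1 ∨ ∃ h : p.1 = q.1, H q.1 (h ▸ p.2) q.2

/-- The complement of the underlying (simple) graph of a digraph. -/
def complUnderlying {V : Type u} (A : V → V → Prop) : SimpleGraph V where
  Adj x y := x ≠ y ∧ ¬ A x y ∧ ¬ A y x
  symm := ⟨fun x y ⟨h1, h2, h3⟩ => ⟨h1.symm, h3, h2⟩⟩
  loopless := ⟨fun x h => h.1 rfl⟩

/-- `x` is a `k`-king: it reaches every vertex by a path of length at most `k`. -/
def IsKKing {V : Type u} (A : V → V → Prop) (k : ℕ) (x : V) : Prop :=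
  ∀ y, ReachIn A k x y

/-- A (directed) path given as a list of vertices. -/
def IsPathList {V : Type u} (A : V → V → Prop) (l : List V) : Prop :=
  l.Nodup ∧ l.Chain' A

/-- A (directed) cycle given as a list of distinct vertices. -/
def IsCycleList {V : Type u} (A : V → V → Prop) (l : List V) : Prop :=
  2 ≤ l.length ∧ l.Nodup ∧ l.Chain' A ∧
    ∀ x ∈ l.getLast?, ∀ y ∈ l.head?, A x y

/-!
Once a walk in `T[H₁, …, H_t]` leaves the fibre `V(H_i)` it can enter any vertex of any fibre it
visits, so `(i, x)` reaches a vertex of another fibre within `k` steps iff `u_i` reaches its index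
in `T`. Inside the fibre, a walk from `(i, x)` to `(i, y)` either stays in `H_i` or starts with
an arc `u_i u_z` of `T` and returns to `u_i`; shortcutting repeated vertices of this closed walk
gives a directed cycle through `u_i` of length at most `k`. Conversely, going once around such a
cycle leads from `(i, x)` to `(i, y)`.
-/

section Walks

variable {V : Type u} {W : Type v} {A : V → V → Prop} {B : W → W → Prop}

namespace ReachIn

lemma refl (A : V → V → Prop) : ∀ (n : ℕ) (x : V), ReachIn A n x x
  | 0, _ => rfl
  | _ + 1, _ => Or.inl rfl

lemma succ : ∀ {n : ℕ} {x y : V}, ReachIn A n x y → ReachIn A (n + 1) x y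
  | 0, _, _, h => Or.inl h
  | _ + 1, _, _, Or.inl h => Or.inl h
  | _ + 1, _, _, Or.inr ⟨z, hxz, h⟩ => Or.inr ⟨z, hxz, h.succ⟩

lemma mono {n m : ℕ} {x y : V} (h : ReachIn A n x y) (hnm : n ≤ m) : ReachIn A m x y := by
  induction hnm with
  | refl => exact h
  | step _ ih => exact ih.succ

lemma cons {n : ℕ} {x z y : V} (hxz : A x z) (h : ReachIn A n z y) : ReachIn A (n + 1) x y :=
  Or.inr ⟨z, hxz, h⟩

lemma map (f : V → W) (hf : ∀ a b, A a b → f a = f b ∨ B (f a) (f b)) :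
    ∀ {n : ℕ} {x y : V}, ReachIn A n x y → ReachIn B n (f x) (f y)
  | 0, _, _, h => congrArg f h
  | _ + 1, _, _, Or.inl h => h ▸ refl B _ _
  | _ + 1, _, _, Or.inr ⟨z, hxz, h⟩ => by
    rcases hf _ _ hxz with hfz | hfz
    · exact hfz ▸ (h.map f hf).succ
    · exact cons hfz (h.map f hf)

end ReachIn

lemma reachIn_of_isChain : ∀ {x : V} {l : List V}, (x :: l).IsChain A →
    ReachIn A l.length x ((x :: l).getLast (List.cons_ne_nil x l))
  | _, [], _ => rfl
  | _, y :: l, h => by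
    rw [List.isChain_cons_cons] at h
    rw [List.getLast_cons_cons]
    exact ReachIn.cons h.1 (reachIn_of_isChain h.2)

lemma exists_isPathList_of_reachIn : ∀ {n : ℕ} {x y : V}, ReachIn A n x y →
    ∃ p, IsPathList A p ∧ p.head? = some x ∧ p.getLast? = some y ∧ p.length ≤ n + 1
  | 0, x, _, rfl => ⟨[x], ⟨List.nodup_singleton x, List.isChain_singleton x⟩, rfl, rfl, le_rfl⟩
  | _ + 1, x, _, Or.inl rfl =>
    ⟨[x], ⟨List.nodup_singleton x, List.isChain_singleton x⟩, rfl, rfl, by simp⟩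
  | n + 1, x, y, Or.inr ⟨z, hxz, h⟩ => by
    obtain ⟨p, ⟨hnd, hch⟩, hhead, hlast, hlen⟩ := exists_isPathList_of_reachIn h
    by_cases hx : x ∈ p
    · obtain ⟨a, b, rfl⟩ := List.append_of_mem hx
      refine ⟨x :: b, ⟨hnd.sublist (List.sublist_append_right a _),
        hch.suffix (List.suffix_append a _)⟩, rfl, ?_, ?_⟩
      · rwa [List.getLast?_append_of_ne_nil _ (List.cons_ne_nil x b)] at hlast
      · simp only [List.length_append, List.length_cons] at hlen ⊢
        omega
    · refine ⟨x :: p, ⟨List.nodup_cons.mpr ⟨hx, hnd⟩, List.isChain_cons.mpr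
        ⟨fun w hw => ?_, hch⟩⟩, rfl, ?_, by simpa using hlen⟩
      · rw [hhead, Option.mem_some_iff] at hw
        exact hw ▸ hxz
      · rw [List.getLast?_cons, hlast]
        rfl

lemma IsPathList.isCycleList {p : List V} (hp : IsPathList A p) {z i : V}
    (hhead : p.head? = some z) (hlast : p.getLast? = some i) (hzi : z ≠ i) (hiz : A i z) :
    IsCycleList A p := by
  refine ⟨?_, hp.1, hp.2, fun a ha b hb => ?_⟩
  · match p, hhead, hlast with
    | [_], rfl, rfl => exact absurd rfl hzi
    | _ :: _ :: _, _, _ => simp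
  · rw [hlast, Option.mem_some_iff] at ha
    rw [hhead, Option.mem_some_iff] at hb
    exact ha ▸ hb ▸ hiz

lemma exists_isCycleList_of_reachIn {n : ℕ} {z i : V} (hzi : z ≠ i) (hiz : A i z)
    (h : ReachIn A n z i) : ∃ l, IsCycleList A l ∧ l.length ≤ n + 1 ∧ i ∈ l := by
  obtain ⟨p, hp, hhead, hlast, hlen⟩ := exists_isPathList_of_reachIn h
  exact ⟨p, hp.isCycleList hhead hlast hzi hiz, hlen, List.mem_of_getLast? hlast⟩

lemma IsCycleList.cycle_chain {l : List V} (hl : IsCycleList A l) : Cycle.Chain A l := by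
  obtain ⟨-, -, hch, hclose⟩ := hl
  match l, hch, hclose with
  | [], _, _ => trivial
  | a :: m, hch, hclose =>
    rw [Cycle.chain_coe_cons, ← List.cons_append, List.isChain_append]
    exact ⟨hch, List.isChain_singleton a, fun x hx y hy => hclose x hx y (by simpa using hy)⟩

lemma IsCycleList.exists_reachIn {l : List V} (hl : IsCycleList A l) {i : V} (hi : i ∈ l) :
    ∃ z, z ≠ i ∧ A i z ∧ ReachIn A (l.length - 1) z i := by
  obtain ⟨a, b, rfl⟩ := List.append_of_mem hi
  have hrot : (a ++ i :: b) ~r (i :: (b ++ a)) := by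
    simpa using List.isRotated_append (l := a) (l' := i :: b)
  have hch : Cycle.Chain A (i :: (b ++ a) : List V) :=
    (Cycle.coe_eq_coe.mpr hrot) ▸ hl.cycle_chain
  have hnd : (i :: (b ++ a)).Nodup := hrot.nodup_iff.mp hl.2.1
  obtain ⟨z, r, hzr⟩ : ∃ z r, b ++ a = z :: r := by
    refine List.exists_cons_of_ne_nil fun hba => ?_
    have := hl.1
    simp_all
  rw [hzr] at hch hnd
  rw [Cycle.chain_coe_cons, List.cons_append, List.isChain_cons_cons] at hch
  refine ⟨z, fun hzi => (List.nodup_cons.mp hnd).1 (hzi ▸ List.mem_cons_self), hch.1, ?_⟩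
  have hlen : (a ++ i :: b).length - 1 = (r ++ [i]).length := by
    have := congrArg List.length hzr
    simp at this ⊢
    omega
  rw [hlen]
  simpa using reachIn_of_isChain hch.2

end Walks

section Composition

variable {t : ℕ} {T : Fin t → Fin t → Prop} {V : Fin t → Type u} {H : ∀ i, V i → V i → Prop}

lemma ReachIn.comp_fst {n : ℕ} {p q : Σ i, V i} (h : ReachIn (Comp T V H) n p q) :
    ReachIn T n p.1 q.1 :=
  h.map Sigma.fst fun _ _ hpq => hpq.symm.imp_left Exists.fst

lemma ReachIn.comp_mk {n : ℕ} {i : Fin t} {x y : V i} (h : ReachIn (H i) n x y) :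
    ReachIn (Comp T V H) n ⟨i, x⟩ ⟨i, y⟩ :=
  h.map (Sigma.mk i) fun _ _ hab => Or.inr (Or.inr ⟨rfl, hab⟩)

lemma reachIn_comp_of_ne [∀ i, Nonempty (V i)] {n : ℕ} {i j : Fin t} (hij : i ≠ j)
    (h : ReachIn T n i j) (x : V i) (y : V j) : ReachIn (Comp T V H) n ⟨i, x⟩ ⟨j, y⟩ := by
  induction n generalizing i with
  | zero => exact absurd h hij
  | succ n ih =>
    rcases h with rfl | ⟨z, hiz, hz⟩
    · exact absurd rfl hij
    · by_cases hzj : z = j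
      · subst hzj
        exact ReachIn.cons (Or.inl hiz) (ReachIn.refl _ _ _)
      · exact ReachIn.cons (Or.inl hiz) (ih hzj hz (Classical.arbitrary _))

lemma ReachIn.comp_cases : ∀ {n : ℕ} {i : Fin t} {x : V i} {q : Σ i, V i},
    ReachIn (Comp T V H) n ⟨i, x⟩ q →
      (∃ y, q = ⟨i, y⟩ ∧ ReachIn (H i) n x y) ∨ ∃ z m, T i z ∧ m < n ∧ ReachIn T m z q.1
  | 0, _, x, _, rfl => Or.inl ⟨x, rfl, rfl⟩
  | _ + 1, _, x, _, Or.inl rfl => Or.inl ⟨x, rfl, ReachIn.refl _ _ _⟩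
  | n + 1, _, _, _, Or.inr ⟨⟨j, w⟩, Or.inl hij, h⟩ =>
    Or.inr ⟨j, n, hij, Nat.lt_succ_self n, h.comp_fst⟩
  | _ + 1, _, _, _, Or.inr ⟨⟨_, _⟩, Or.inr ⟨hij, hxw⟩, h⟩ => by
    dsimp only at hij hxw
    subst hij
    exact h.comp_cases.imp (fun ⟨y, hq, hy⟩ => ⟨y, hq, ReachIn.cons hxw hy⟩)
      fun ⟨z, m, hiz, hm, hz⟩ => ⟨z, m, hiz, Nat.lt_succ_of_lt hm, hz⟩

lemma isKKing_of_isKKing_comp [∀ i, Nonempty (V i)] {k : ℕ} {i : Fin t} {x : V i}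
    (h : IsKKing (Comp T V H) k ⟨i, x⟩) : IsKKing T k i :=
  fun j => (h ⟨j, Classical.arbitrary _⟩).comp_fst

lemma exists_isCycleList_of_not_reachIn (hT : Loopless T) {k : ℕ} {i : Fin t} {x y : V i}
    (h : ReachIn (Comp T V H) k ⟨i, x⟩ ⟨i, y⟩) (hxy : ¬ ReachIn (H i) k x y) :
    ∃ l, IsCycleList T l ∧ l.length ≤ k ∧ i ∈ l := by
  rcases h.comp_cases with ⟨y', hy', hxy'⟩ | ⟨z, m, hiz, hm, hz⟩
  · obtain rfl : y = y' := eq_of_heq (Sigma.mk.inj_iff.mp hy').2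
    exact absurd hxy' hxy
  · obtain ⟨l, hl, hlen, hi⟩ :=
      exists_isCycleList_of_reachIn (by rintro rfl; exact hT z hiz) hiz hz
    exact ⟨l, hl, by omega, hi⟩

lemma reachIn_comp_of_mem_isCycleList [∀ i, Nonempty (V i)] {l : List (Fin t)}
    (hl : IsCycleList T l) {i : Fin t} (hi : i ∈ l) (x y : V i) :
    ReachIn (Comp T V H) l.length ⟨i, x⟩ ⟨i, y⟩ := by
  obtain ⟨z, hzi, hiz, hz⟩ := hl.exists_reachIn hi
  have hlen : l.length - 1 + 1 = l.length := Nat.sub_add_cancel (by have := hl.1; omega)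
  exact hlen ▸ ReachIn.cons (Or.inl hiz) (reachIn_comp_of_ne hzi hz (Classical.arbitrary _) y)

lemma isKKing_comp [∀ i, Nonempty (V i)] {k : ℕ} {i : Fin t} (hT : IsKKing T k i)
    (hH : (∀ x, IsKKing (H i) k x) ∨ ∃ l, IsCycleList T l ∧ l.length ≤ k ∧ i ∈ l) (x : V i) :
    IsKKing (Comp T V H) k ⟨i, x⟩ := by
  rintro ⟨j, y⟩
  by_cases hij : i = j
  · subst hij
    rcases hH with hH | ⟨l, hl, hlk, hi⟩
    · exact (hH x y).comp_mk
    · exact (reachIn_comp_of_mem_isCycleList hl hi x y).mono hlk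
  · exact reachIn_comp_of_ne hij (hT j) x y

end Composition

theorem stmt5_general {t : ℕ} (V : Fin t → Type u) [∀ i, Fintype (V i)]
    [∀ i, Nonempty (V i)] (T : Fin t → Fin t → Prop) (H : ∀ i, V i → V i → Prop)
    (hTl : Loopless T)
    (k : ℕ) :
    (∀ x : Σ i, V i, IsKKing (Comp T V H) k x) ↔
      ∀ i : Fin t, IsKKing T k i ∧
        ((∀ x : V i, IsKKing (H i) k x) ∨
          (2 ≤ Fintype.card (V i) ∧
            ∃ l : List (Fin t), IsCycleList T l ∧ l.length ≤ k ∧ i ∈ l)) := by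
  constructor
  · intro h i
    refine ⟨isKKing_of_isKKing_comp (h ⟨i, Classical.arbitrary _⟩),
      or_iff_not_imp_left.mpr fun hH => ?_⟩
    obtain ⟨x, y, hxy⟩ : ∃ x y, ¬ ReachIn (H i) k x y := by simpa [IsKKing] using hH
    exact ⟨Fintype.one_lt_card_iff.mpr ⟨x, y, fun e => hxy (e ▸ ReachIn.refl _ _ _)⟩,
      exists_isCycleList_of_not_reachIn hTl (h ⟨i, x⟩ ⟨i, y⟩) hxy⟩
  · rintro h ⟨i, x⟩
    exact isKKing_comp (h i).1 ((h i).2.imp_right And.right) x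

/-- For `k ≥ 2`, all vertices of a composition `Q = T[H₁,…,H_t]` are `k`-kings
if and only if for each `i`, the vertex `u_i` is a `k`-king of `T` and either all vertices of
`H_i` are `k`-kings of `H_i`, or `|V(H_i)| ≥ 2` and `u_i` lies on a directed cycle of `T` of
length at most `k`. -/
theorem stmt5 {t : ℕ} (ht : 2 ≤ t) (V : Fin t → Type u) [∀ i, Fintype (V i)]
    [∀ i, Nonempty (V i)] (T : Fin t → Fin t → Prop) (H : ∀ i, V i → V i → Prop)
    (hTl : Loopless T) (hHl : ∀ i, Loopless (H i))
    (k : ℕ) (hk : 2 ≤ k) :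
    (∀ x : Σ i, V i, IsKKing (Comp T V H) k x) ↔
      ∀ i : Fin t, IsKKing T k i ∧
        ((∀ x : V i, IsKKing (H i) k x) ∨
          (2 ≤ Fintype.card (V i) ∧
            ∃ l : List (Fin t), IsCycleList T l ∧ l.length ≤ k ∧ i ∈ l)) :=
  stmt5_general V T H hTl k
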